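/- In the weighted Bucklin construction (W-votes summing to 2K all ranking p first after modification, plus votes a ≻ b ≻ p ≻ c and c ≻ b ≻ a ≻ p each of weight K, tie-breaking p ≻ a ≻ b ≻ c), if p wins, then no W-vote of positive weight places b in the second position, and the total weight of W-votes placing a second equals exactly K. -/

import Mathlib

/-- The four candidates. -/
inductive Cand : Type
  | p | a | b | c
deriving DecidableEq

open Cand

/-- Total weight of the votes ranking `x` within the top `ℓ` positions. -/
def topW (E : Multiset (ℕ × List Cand)) (ℓ : ℕ) (x : Cand) : ℕ :=
  (E.map fun v => if v.2.idxOf x < ℓ then v.1 else 0).sum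

/-- Total weight of the election. -/
def totalW (E : Multiset (ℕ × List Cand)) : ℕ :=
  (E.map Prod.fst).sum

/-- Bucklin score of `x`: least `ℓ` such that the weight of votes ranking `x` in the
top `ℓ` positions is strictly more than half the total weight. -/
noncomputable def bucklinScore (E : Multiset (ℕ × List Cand)) (x : Cand) : ℕ :=
  sInf {ℓ : ℕ | totalW E < 2 * topW E ℓ x}

/-- `x` wins with a score to be minimized (ties broken by the priority order). -/
def WinsMin (score : Cand → ℕ) (prio : Cand → ℕ) (x : Cand) : Prop :=
  ∀ y, y ≠ x → score x < score y ∨ (score x = score y ∧ prio x < prio y)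

/-- Tie-breaking order `p ≻ a ≻ b ≻ c`. -/
def prioPABC : Cand → ℕ
  | Cand.p => 0
  | Cand.a => 1
  | Cand.b => 2
  | Cand.c => 3

/-!
The `W`-votes give `p` weight `2K` at every level and the two fixed votes add `K` at level 3,
so `p` reaches a strict majority of `4K` exactly at level 3. If `p` wins, no other candidate
may reach a majority at level 2. The fixed votes already put `b` at level 2 with weight `2K`,
and `a`, `c` with weight `K` each; so `W`-votes may give `b` nothing in second place and give
`a` and `c` at most `K` each. Since the second places of the `W`-votes are shared among
`a`, `b`, `c` and carry total weight `2K`, `a` gets exactly `K`.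
-/

lemma WinsMin.le {score prio : Cand → ℕ} {x y : Cand} (h : WinsMin score prio x)
    (hy : y ≠ x) : score x ≤ score y := by
  rcases h y hy with h | ⟨h, -⟩ <;> omega

section Bucklin

variable (E F : Multiset (ℕ × List Cand)) (x : Cand)

lemma totalW_add : totalW (E + F) = totalW E + totalW F := by
  simp [totalW]

lemma topW_add (ℓ : ℕ) : topW (E + F) ℓ x = topW E ℓ x + topW F ℓ x := by
  simp [topW]

lemma topW_mono {ℓ ℓ' : ℕ} (h : ℓ ≤ ℓ') : topW E ℓ x ≤ topW E ℓ' x := by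
  refine Multiset.sum_map_le_sum_map _ _ fun v _ => ?_
  split_ifs <;> omega

variable {E x}

lemma two_mul_topW_le_of_lt_bucklinScore {ℓ : ℕ} (h : ℓ < bucklinScore E x) :
    2 * topW E ℓ x ≤ totalW E := by
  by_contra hmaj
  have : bucklinScore E x ≤ ℓ :=
    Nat.sInf_le (show ℓ ∈ {ℓ | totalW E < 2 * topW E ℓ x} by simpa using hmaj)
  omega

lemma lt_bucklinScore {m ℓ : ℕ} (hm : totalW E < 2 * topW E m x)
    (hℓ : 2 * topW E ℓ x ≤ totalW E) : ℓ < bucklinScore E x := by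
  by_contra! hle
  have hmem : totalW E < 2 * topW E (bucklinScore E x) x :=
    Nat.sInf_mem (s := {ℓ | totalW E < 2 * topW E ℓ x}) ⟨m, hm⟩
  have := topW_mono E x hle
  omega

end Bucklin

def secondW (V : Multiset (ℕ × List Cand)) (q : Cand) : ℕ :=
  ((V.filter fun v => v.2[1]? = some q).map Prod.fst).sum

lemma secondW_eq_zero_iff {V : Multiset (ℕ × List Cand)} {q : Cand} :
    secondW V q = 0 ↔ ∀ v ∈ V, 0 < v.1 → v.2[1]? ≠ some q := by
  simp only [secondW, Multiset.sum_eq_zero_iff, Multiset.mem_map, Multiset.mem_filter]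
  constructor
  · intro h v hv hw hq
    exact hw.ne' (h v.1 ⟨v, ⟨hv, hq⟩, rfl⟩)
  · rintro h _ ⟨v, ⟨hv, hq⟩, rfl⟩
    by_contra hw
    exact h v hv (Nat.pos_of_ne_zero hw) hq

lemma List.idxOf_lt_two_iff_of_head {α : Type*} [DecidableEq α] {l : List α} {x q : α}
    (hx : l.head? = some x) (hq : q ≠ x) (hql : q ∈ l) : l.idxOf q < 2 ↔ l[1]? = some q := by
  match l, hx with
  | _ :: y :: rest, rfl =>
    rw [List.idxOf_cons_ne _ (Ne.symm hq)]
    by_cases hy : y = q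
    · simp [hy]
    · simp [List.idxOf_cons_ne _ hy, hy]
  | [_], rfl => simp_all

lemma secondW_cons (v : ℕ × List Cand) (V : Multiset (ℕ × List Cand)) (q : Cand) :
    secondW (v ::ₘ V) q = (if v.2[1]? = some q then v.1 else 0) + secondW V q := by
  by_cases h : v.2[1]? = some q <;> simp [secondW, h]

section VotesWithHead

variable {V : Multiset (ℕ × List Cand)} {x : Cand}

lemma topW_eq_totalW_of_head (hV : ∀ v ∈ V, v.2.head? = some x) {ℓ : ℕ} (hℓ : 0 < ℓ) :
    topW V ℓ x = totalW V := by
  refine congrArg Multiset.sum (Multiset.map_congr rfl fun v hv => ?_)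
  obtain ⟨rest, hrest⟩ := List.head?_eq_some_iff.mp (hV v hv)
  simp [hrest, hℓ]

lemma topW_two_eq_secondW {q : Cand} (hV : ∀ v ∈ V, v.2.head? = some x ∧ q ∈ v.2)
    (hq : q ≠ x) : topW V 2 q = secondW V q := by
  induction V using Multiset.induction with
  | empty => simp [topW, secondW]
  | cons v V ih =>
    have hv := hV v (Multiset.mem_cons_self v V)
    rw [secondW_cons, ← ih fun w hw => hV w (Multiset.mem_cons_of_mem hw)]
    simp only [topW, Multiset.map_cons, Multiset.sum_cons,
      List.idxOf_lt_two_iff_of_head hv.1 hq hv.2]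

end VotesWithHead

lemma second_eq_a_or_b_or_c {l : List Cand} (hperm : l.Perm [p, a, b, c])
    (hhead : l.head? = some p) :
    l[1]? = some a ∨ l[1]? = some b ∨ l[1]? = some c := by
  match l, hhead, hperm.length_eq with
  | _ :: y :: rest, rfl, _ =>
    have : y ∈ [a, b, c] := ((List.perm_cons p).mp hperm).mem_iff.mp (by simp)
    simpa using this

lemma secondW_a_add_b_add_c {V : Multiset (ℕ × List Cand)}
    (hV : ∀ v ∈ V, v.2.Perm [p, a, b, c] ∧ v.2.head? = some p) :
    secondW V a + secondW V b + secondW V c = totalW V := by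
  induction V using Multiset.induction with
  | empty => simp [secondW, totalW]
  | cons v V ih =>
    have hv := hV v (Multiset.mem_cons_self v V)
    have htot : totalW (v ::ₘ V) = v.1 + totalW V := by simp [totalW]
    rw [secondW_cons, secondW_cons, secondW_cons, htot,
      ← ih fun w hw => hV w (Multiset.mem_cons_of_mem hw)]
    rcases second_eq_a_or_b_or_c hv.1 hv.2 with h | h | h <;> simp [h] <;> omega

def fixedVotes (K : ℕ) : Multiset (ℕ × List Cand) :=
  {(K, [a, b, p, c]), (K, [c, b, a, p])}

section FixedVotes

variable (K : ℕ)

lemma totalW_fixedVotes : totalW (fixedVotes K) = 2 * K := by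
  simp [fixedVotes, totalW]; ring

lemma topW_fixedVotes_two_p : topW (fixedVotes K) 2 p = 0 := by simp [fixedVotes, topW]
lemma topW_fixedVotes_three_p : topW (fixedVotes K) 3 p = K := by simp [fixedVotes, topW]
lemma topW_fixedVotes_two_a : topW (fixedVotes K) 2 a = K := by simp [fixedVotes, topW]
lemma topW_fixedVotes_two_b : topW (fixedVotes K) 2 b = 2 * K := by
  simp [fixedVotes, topW]; ring
lemma topW_fixedVotes_two_c : topW (fixedVotes K) 2 c = K := by simp [fixedVotes, topW]

end FixedVotes

theorem stmt_10_general (K : ℕ) (hK : 0 < K) (W : Multiset ℕ)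
    (hsum : W.sum = 2 * K)
    (V : Multiset (ℕ × List Cand)) (hV : V.map Prod.fst = W)
    (hrank : ∀ v ∈ V, v.2.Perm [p, a, b, c] ∧ v.2.head? = some p) :
    WinsMin (bucklinScore (V + {(K, [a, b, p, c]), (K, [c, b, a, p])})) prioPABC p →
      (∀ v ∈ V, 0 < v.1 → v.2[1]? ≠ some b) ∧
      ((V.filter fun v => v.2[1]? = some a).map Prod.fst).sum = K := by
  intro hwin
  change WinsMin (bucklinScore (V + fixedVotes K)) prioPABC p at hwin
  have htotV : totalW V = 2 * K := by rw [totalW, hV, hsum]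
  have htot : totalW (V + fixedVotes K) = 4 * K := by
    rw [totalW_add, htotV, totalW_fixedVotes]; ring
  have hVp (ℓ : ℕ) (hℓ : 0 < ℓ) : topW V ℓ p = 2 * K :=
    htotV ▸ topW_eq_totalW_of_head (fun v hv => (hrank v hv).2) hℓ
  have hscore : 2 < bucklinScore (V + fixedVotes K) p := by
    refine lt_bucklinScore (m := 3) ?_ ?_ <;>
      simp only [topW_add, hVp 2 two_pos, hVp 3 three_pos, topW_fixedVotes_two_p,
        topW_fixedVotes_three_p, htot] <;> omega
  have hmaj (y : Cand) (hy : y ≠ p) : 2 * topW (V + fixedVotes K) 2 y ≤ 4 * K :=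
    htot ▸ two_mul_topW_le_of_lt_bucklinScore (hscore.trans_le (hwin.le hy))
  have hsecond (q : Cand) (hq : q ≠ p) : topW V 2 q = secondW V q :=
    topW_two_eq_secondW
      (fun v hv => ⟨(hrank v hv).2, (hrank v hv).1.mem_iff.mpr (by cases q <;> simp)⟩) hq
  have ha := hmaj a (by decide)
  have hb := hmaj b (by decide)
  have hc := hmaj c (by decide)
  rw [topW_add, hsecond a (by decide), topW_fixedVotes_two_a] at ha
  rw [topW_add, hsecond b (by decide), topW_fixedVotes_two_b] at hb
  rw [topW_add, hsecond c (by decide), topW_fixedVotes_two_c] at hc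
  have hsplit := secondW_a_add_b_add_c hrank
  exact ⟨secondW_eq_zero_iff.mp (by omega), show secondW V a = K by omega⟩

/-- Bucklin construction, backward direction: if the `W`-votes (total weight `2K`) all
rank `p` first and `p` wins the weighted Bucklin election (fixed votes `a ≻ b ≻ p ≻ c`
and `c ≻ b ≻ a ≻ p` each of weight `K`, tie-breaking `p ≻ a ≻ b ≻ c`), then no `W`-vote
of positive weight places `b` second, and the total weight of `W`-votes placing `a`
second is exactly `K`. -/
theorem stmt_10 (K : ℕ) (hK : 0 < K) (W : Multiset ℕ)
    (hpos : ∀ w ∈ W, 0 < w) (hsum : W.sum = 2 * K)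
    (V : Multiset (ℕ × List Cand)) (hV : V.map Prod.fst = W)
    (hrank : ∀ v ∈ V, v.2.Perm [p, a, b, c] ∧ v.2.head? = some p) :
    WinsMin (bucklinScore (V + {(K, [a, b, p, c]), (K, [c, b, a, p])})) prioPABC p →
      (∀ v ∈ V, 0 < v.1 → v.2[1]? ≠ some b) ∧
      ((V.filter fun v => v.2[1]? = some a).map Prod.fst).sum = K :=
  stmt_10_general K hK W hsum V hV hrank
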